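/- (Gaussian lower bound at time 2.) There exists a constant c > 0 such that for all z, z' ∈ ℍ², H(2, z, z') ≥ c · e^{−d_g(z,z')²/2}. -/
import Mathlib

open MeasureTheory Real Set

/-- Inverse hyperbolic cosine. -/
noncomputable def arcoshR (x : ℝ) : ℝ := Real.log (x + Real.sqrt (x ^ 2 - 1))

/-- The hyperbolic half-plane, as a subset of `ℝ × ℝ`. -/
def H2 : Set (ℝ × ℝ) := {z | 0 < z.2}

/-- The geodesic distance on the hyperbolic half-plane. -/
noncomputable def hypDist (z z' : ℝ × ℝ) : ℝ :=
  arcoshR (1 + ((z.1 - z'.1) ^ 2 + (z.2 - z'.2) ^ 2) / (2 * z.2 * z'.2))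

/-- The heat kernel of the hyperbolic half-plane. -/
noncomputable def heatH (t : ℝ) (z z' : ℝ × ℝ) : ℝ :=
  Real.sqrt 2 / (4 * Real.pi * t) ^ ((3 : ℝ) / 2) * Real.exp (-t / 4) *
    ∫ s in Set.Ioi (hypDist z z'),
      s * Real.exp (-s ^ 2 / (4 * t)) / Real.sqrt (Real.cosh s - Real.cosh (hypDist z z'))

namespace HeatAux

/-- The integrand at time `t = 2`. -/
noncomputable def f (ρ s : ℝ) : ℝ :=
  s * Real.exp (-s ^ 2 / (4 * 2)) / Real.sqrt (Real.cosh s - Real.cosh ρ)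

lemma cosh_add_sub (u v : ℝ) :
    Real.cosh (u + v) - Real.cosh (u - v) = 2 * Real.sinh u * Real.sinh v := by
  rw [Real.cosh_add, Real.cosh_sub]; ring

lemma cosh_sub_cosh (ρ s : ℝ) :
    Real.cosh s - Real.cosh ρ
      = 2 * Real.sinh ((s + ρ) / 2) * Real.sinh ((s - ρ) / 2) := by
  have h := cosh_add_sub ((s + ρ) / 2) ((s - ρ) / 2)
  have e1 : (s + ρ) / 2 + (s - ρ) / 2 = s := by ring
  have e2 : (s + ρ) / 2 - (s - ρ) / 2 = ρ := by ring
  rw [e1, e2] at h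
  exact h

lemma sinh_le_half_exp (x : ℝ) : Real.sinh x ≤ Real.exp x / 2 := by
  rw [Real.sinh_eq]
  have := (Real.exp_pos (-x)).le
  linarith

lemma sinh_le_mul_exp {x : ℝ} (hx : 0 ≤ x) : Real.sinh x ≤ x * Real.exp x := by
  rw [Real.sinh_eq]
  have h1 : -(2 * x) + 1 ≤ Real.exp (-(2 * x)) := Real.add_one_le_exp _
  have h2 : Real.exp x * Real.exp (-(2 * x)) = Real.exp (-x) := by
    rw [← Real.exp_add]; ring_nf
  nlinarith [mul_le_mul_of_nonneg_left h1 (Real.exp_pos x).le, Real.exp_pos x]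

lemma cosh_diff_le {ρ s : ℝ} (hρ : 0 ≤ ρ) (hs : ρ ≤ s) :
    Real.cosh s - Real.cosh ρ ≤ (s - ρ) * Real.exp s := by
  rw [cosh_sub_cosh]
  set a := (s + ρ) / 2 with ha
  set b := (s - ρ) / 2 with hb
  have ha0 : 0 ≤ a := by simp [ha]; linarith
  have hb0 : 0 ≤ b := by simp [hb]; linarith
  have h1 : Real.sinh a ≤ Real.exp a / 2 := sinh_le_half_exp a
  have h2 : Real.sinh b ≤ b * Real.exp b := sinh_le_mul_exp hb0
  have hprod : Real.sinh a * Real.sinh b ≤ (Real.exp a / 2) * (b * Real.exp b) :=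
    mul_le_mul h1 h2 (Real.sinh_nonneg_iff.2 hb0) (by positivity)
  have he : Real.exp a * Real.exp b = Real.exp s := by
    rw [← Real.exp_add]; congr 1; rw [ha, hb]; ring
  have hbe : b = (s - ρ) / 2 := hb
  nlinarith [Real.exp_pos s, hprod, he]

lemma cosh_diff_ge {ρ s : ℝ} (hρ : 0 ≤ ρ) (hs : ρ ≤ s) :
    s * (s - ρ) / 2 ≤ Real.cosh s - Real.cosh ρ := by
  rw [cosh_sub_cosh]
  set a := (s + ρ) / 2 with ha
  set b := (s - ρ) / 2 with hb
  have ha0 : 0 ≤ a := by simp [ha]; linarith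
  have hb0 : 0 ≤ b := by simp [hb]; linarith
  have h1 : a ≤ Real.sinh a := Real.self_le_sinh_iff.2 ha0
  have h2 : b ≤ Real.sinh b := Real.self_le_sinh_iff.2 hb0
  have hprod : a * b ≤ Real.sinh a * Real.sinh b :=
    mul_le_mul h1 h2 hb0 (Real.sinh_nonneg_iff.2 ha0)
  have : a * b = (s + ρ) * (s - ρ) / 4 := by rw [ha, hb]; ring
  nlinarith [hprod]

lemma cosh_diff_pos {ρ s : ℝ} (hρ : 0 ≤ ρ) (hs : ρ < s) :
    0 < Real.cosh s - Real.cosh ρ := by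
  have := cosh_diff_ge hρ hs.le
  nlinarith

lemma f_nonneg {ρ : ℝ} (hρ : 0 ≤ ρ) {s : ℝ} (hs : ρ < s) : 0 ≤ f ρ s := by
  have hs0 : 0 < s := lt_of_le_of_lt hρ hs
  unfold f
  positivity

lemma f_contOn {ρ : ℝ} (hρ : 0 ≤ ρ) : ContinuousOn (f ρ) (Ioi ρ) := by
  apply ContinuousOn.div
  · exact (continuous_id.mul (by continuity)).continuousOn
  · exact (Real.continuous_sqrt.comp (by continuity)).continuousOn
  · intro s hs
    exact ne_of_gt (Real.sqrt_pos.2 (cosh_diff_pos hρ hs))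

lemma shifted_gamma (ρ : ℝ) :
    IntegrableOn (fun s : ℝ => Real.exp (-(s - ρ)) * (s - ρ) ^ ((1 : ℝ) / 2 - 1))
      (Ioi ρ) := by
  have h0 : IntegrableOn (fun x : ℝ => Real.exp (-x) * x ^ ((1 : ℝ) / 2 - 1)) (Ioi 0) :=
    Real.GammaIntegral_convergent (by norm_num)
  have h1 : Integrable
      ((Ioi (0 : ℝ)).indicator fun x => Real.exp (-x) * x ^ ((1 : ℝ) / 2 - 1)) volume :=
    (integrable_indicator_iff measurableSet_Ioi).2 h0
  have h2 := h1.comp_sub_right ρ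
  rw [← integrable_indicator_iff measurableSet_Ioi]
  have : (Ioi ρ).indicator (fun s : ℝ => Real.exp (-(s - ρ)) * (s - ρ) ^ ((1 : ℝ) / 2 - 1))
      = fun x : ℝ =>
        (Ioi (0 : ℝ)).indicator (fun x => Real.exp (-x) * x ^ ((1 : ℝ) / 2 - 1)) (x - ρ) := by
    funext x
    simp only [Set.indicator_apply, mem_Ioi, sub_pos]
  rw [this]
  exact h2

lemma sqrt_le_exp {s : ℝ} (hs : 0 ≤ s) : Real.sqrt s ≤ Real.exp s := by
  have h1 : Real.sqrt s ≤ s + 1 := by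
    nlinarith [Real.sq_sqrt hs, Real.sqrt_nonneg s]
  have h2 : s + 1 ≤ Real.exp s := Real.add_one_le_exp s
  linarith

lemma f_integrableOn {ρ : ℝ} (hρ : 0 ≤ ρ) : IntegrableOn (f ρ) (Ioi ρ) := by
  apply Integrable.mono'
    (g := fun s => (Real.sqrt 2 * Real.exp 8) *
      (Real.exp (-(s - ρ)) * (s - ρ) ^ ((1 : ℝ) / 2 - 1)))
  · exact (shifted_gamma ρ).const_mul _
  · exact (f_contOn hρ).aestronglyMeasurable measurableSet_Ioi
  · filter_upwards [ae_restrict_mem measurableSet_Ioi] with s hs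
    have hsρ : ρ < s := hs
    have hs0 : 0 < s := lt_of_le_of_lt hρ hsρ
    have hd0 : 0 < Real.cosh s - Real.cosh ρ := cosh_diff_pos hρ hsρ
    have hD : 0 < Real.sqrt (Real.cosh s - Real.cosh ρ) := Real.sqrt_pos.2 hd0
    rw [Real.norm_eq_abs, abs_of_nonneg (f_nonneg hρ hsρ)]
    unfold f
    rw [div_le_iff₀ hD]
    have hBpos : 0 < Real.sqrt (s - ρ) := Real.sqrt_pos.2 (by linarith)
    have hrpow : ((s - ρ) : ℝ) ^ ((1 : ℝ) / 2 - 1) = (Real.sqrt (s - ρ))⁻¹ := by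
      rw [show (1 : ℝ) / 2 - 1 = -(1 / 2) by norm_num,
        Real.rpow_neg (by linarith : (0:ℝ) ≤ s - ρ), ← Real.sqrt_eq_rpow]
    -- lower bound for sqrt of cosh difference
    have hlow : Real.sqrt (s * (s - ρ) / 2) ≤ Real.sqrt (Real.cosh s - Real.cosh ρ) :=
      Real.sqrt_le_sqrt (cosh_diff_ge hρ hsρ.le)
    have hsplit : Real.sqrt (s * (s - ρ) / 2)
        = Real.sqrt s * Real.sqrt (s - ρ) / Real.sqrt 2 := by
      rw [Real.sqrt_div (mul_nonneg hs0.le (by linarith)), Real.sqrt_mul hs0.le]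
    have hRHSnn : 0 ≤ (Real.sqrt 2 * Real.exp 8) *
        (Real.exp (-(s - ρ)) * (s - ρ) ^ ((1 : ℝ) / 2 - 1)) := by
      rw [hrpow]; positivity
    calc s * Real.exp (-s ^ 2 / (4 * 2))
        ≤ Real.exp 8 * Real.exp (-(s - ρ)) * Real.sqrt s := by
          have h1 : Real.sqrt s * Real.exp (-s ^ 2 / (4 * 2))
              ≤ Real.exp 8 * Real.exp (-(s - ρ)) := by
            calc Real.sqrt s * Real.exp (-s ^ 2 / (4 * 2))
                ≤ Real.exp s * Real.exp (-s ^ 2 / (4 * 2)) :=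
                  mul_le_mul_of_nonneg_right (sqrt_le_exp hs0.le) (Real.exp_pos _).le
              _ = Real.exp (s + -s ^ 2 / (4 * 2)) := by rw [← Real.exp_add]
              _ ≤ Real.exp (8 + -(s - ρ)) := Real.exp_le_exp.2 (by nlinarith [sq_nonneg (s - 8), hρ])
              _ = Real.exp 8 * Real.exp (-(s - ρ)) := Real.exp_add _ _
          have h2 : s * Real.exp (-s ^ 2 / (4 * 2))
              = Real.sqrt s * (Real.sqrt s * Real.exp (-s ^ 2 / (4 * 2))) := by
            rw [← mul_assoc, Real.mul_self_sqrt hs0.le]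
          rw [h2]
          calc Real.sqrt s * (Real.sqrt s * Real.exp (-s ^ 2 / (4 * 2)))
              ≤ Real.sqrt s * (Real.exp 8 * Real.exp (-(s - ρ))) :=
                mul_le_mul_of_nonneg_left h1 (Real.sqrt_nonneg s)
            _ = Real.exp 8 * Real.exp (-(s - ρ)) * Real.sqrt s := by ring
      _ = (Real.sqrt 2 * Real.exp 8) *
            (Real.exp (-(s - ρ)) * (s - ρ) ^ ((1 : ℝ) / 2 - 1)) *
            Real.sqrt (s * (s - ρ) / 2) := by
          rw [hrpow, hsplit]
          field_simp
      _ ≤ (Real.sqrt 2 * Real.exp 8) *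
            (Real.exp (-(s - ρ)) * (s - ρ) ^ ((1 : ℝ) / 2 - 1)) *
            Real.sqrt (Real.cosh s - Real.cosh ρ) :=
          mul_le_mul_of_nonneg_left hlow hRHSnn

lemma f_lower {ρ : ℝ} (hρ : 0 ≤ ρ) {s : ℝ} (hs : s ∈ Ioc ρ (ρ + 1)) :
    Real.sqrt (s - ρ) * (Real.exp (-(ρ + 1) ^ 2 / (4 * 2)) * Real.exp (-(ρ + 1) / 2))
      ≤ f ρ s := by
  obtain ⟨hs1, hs2⟩ := hs
  have hs0 : 0 < s := lt_of_le_of_lt hρ hs1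
  have hd0 : 0 < Real.cosh s - Real.cosh ρ := cosh_diff_pos hρ hs1
  have hD : 0 < Real.sqrt (Real.cosh s - Real.cosh ρ) := Real.sqrt_pos.2 hd0
  unfold f
  rw [le_div_iff₀ hD]
  have hup : Real.cosh s - Real.cosh ρ ≤ (s - ρ) * Real.exp (ρ + 1) := by
    have h1 := cosh_diff_le hρ hs1.le
    have h2 : Real.exp s ≤ Real.exp (ρ + 1) := Real.exp_le_exp.2 hs2
    nlinarith [Real.exp_pos s]
  have hsq : Real.sqrt (Real.cosh s - Real.cosh ρ)
      ≤ Real.sqrt (s - ρ) * Real.exp ((ρ + 1) / 2) := by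
    calc Real.sqrt (Real.cosh s - Real.cosh ρ)
        ≤ Real.sqrt ((s - ρ) * Real.exp (ρ + 1)) := Real.sqrt_le_sqrt hup
      _ = Real.sqrt (s - ρ) * Real.sqrt (Real.exp (ρ + 1)) :=
          Real.sqrt_mul (by linarith) _
      _ = Real.sqrt (s - ρ) * Real.exp ((ρ + 1) / 2) := by rw [← Real.exp_half]
  have hφnn : 0 ≤ Real.sqrt (s - ρ) *
      (Real.exp (-(ρ + 1) ^ 2 / (4 * 2)) * Real.exp (-(ρ + 1) / 2)) := by positivity
  have hss : Real.sqrt (s - ρ) * Real.sqrt (s - ρ) = s - ρ :=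
    Real.mul_self_sqrt (by linarith)
  have hee : Real.exp (-(ρ + 1) / 2) * Real.exp ((ρ + 1) / 2) = 1 := by
    rw [← Real.exp_add]; ring_nf; exact Real.exp_zero
  calc Real.sqrt (s - ρ) * (Real.exp (-(ρ + 1) ^ 2 / (4 * 2)) * Real.exp (-(ρ + 1) / 2)) *
        Real.sqrt (Real.cosh s - Real.cosh ρ)
      ≤ Real.sqrt (s - ρ) * (Real.exp (-(ρ + 1) ^ 2 / (4 * 2)) * Real.exp (-(ρ + 1) / 2)) *
        (Real.sqrt (s - ρ) * Real.exp ((ρ + 1) / 2)) :=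
        mul_le_mul_of_nonneg_left hsq hφnn
    _ = (Real.sqrt (s - ρ) * Real.sqrt (s - ρ)) * Real.exp (-(ρ + 1) ^ 2 / (4 * 2)) *
        (Real.exp (-(ρ + 1) / 2) * Real.exp ((ρ + 1) / 2)) := by ring
    _ = (s - ρ) * Real.exp (-(ρ + 1) ^ 2 / (4 * 2)) := by rw [hss, hee, mul_one]
    _ ≤ s * Real.exp (-s ^ 2 / (4 * 2)) := by
        apply mul_le_mul (by linarith) (Real.exp_le_exp.2 (by nlinarith))
          (Real.exp_pos _).le hs0.le

lemma sqrt_integral (ρ : ℝ) : (∫ s in Ioc ρ (ρ + 1), Real.sqrt (s - ρ)) = 2 / 3 := by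
  rw [← intervalIntegral.integral_of_le (by linarith : ρ ≤ ρ + 1)]
  have h := intervalIntegral.integral_comp_sub_right (a := ρ) (b := ρ + 1)
    (fun x => Real.sqrt x) ρ
  rw [h]
  norm_num
  rw [intervalIntegral.integral_congr (g := fun x : ℝ => x ^ ((1 : ℝ) / 2))
    (fun x _ => Real.sqrt_eq_rpow x)]
  rw [integral_rpow (Or.inl (by norm_num))]
  norm_num

end HeatAux

/-- Gaussian lower bound for the hyperbolic heat kernel at time 2. -/
theorem heat_kernel_gaussian_lower_bound :
    ∃ c > 0, ∀ z z' : ℝ × ℝ, z ∈ H2 → z' ∈ H2 →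
      c * Real.exp (-(hypDist z z') ^ 2 / 2) ≤ heatH 2 z z' := by
  set K : ℝ := Real.sqrt 2 / (4 * Real.pi * 2) ^ ((3 : ℝ) / 2) * Real.exp (-2 / 4) with hK
  have hKpos : 0 < K := by
    rw [hK]
    have h1 : (0 : ℝ) < (4 * Real.pi * 2) ^ ((3 : ℝ) / 2) :=
      Real.rpow_pos_of_pos (by positivity) _
    positivity
  refine ⟨K * (2 / 3 * Real.exp (-1)), by positivity, fun z z' hz hz' => ?_⟩
  set ρ := hypDist z z' with hρdef
  -- nonnegativity of the distance
  have hz2 : 0 < z.2 := hz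
  have hz2' : 0 < z'.2 := hz'
  have hρ0 : 0 ≤ ρ := by
    rw [hρdef]
    unfold hypDist arcoshR
    apply Real.log_nonneg
    have hq : 0 ≤ ((z.1 - z'.1) ^ 2 + (z.2 - z'.2) ^ 2) / (2 * z.2 * z'.2) :=
      div_nonneg (by positivity) (by positivity)
    have := Real.sqrt_nonneg
      ((1 + ((z.1 - z'.1) ^ 2 + (z.2 - z'.2) ^ 2) / (2 * z.2 * z'.2)) ^ 2 - 1)
    linarith
  have hH : heatH 2 z z' = K * ∫ s in Ioi ρ, HeatAux.f ρ s := rfl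
  -- constant in the lower bound on the integrand
  set C : ℝ := Real.exp (-(ρ + 1) ^ 2 / (4 * 2)) * Real.exp (-(ρ + 1) / 2) with hC
  have hphi_int : IntegrableOn (fun s => Real.sqrt (s - ρ) * C) (Ioc ρ (ρ + 1)) :=
    (((Real.continuous_sqrt.comp (continuous_id.sub continuous_const)).mul
      continuous_const)).integrableOn_Ioc
  have hstep2 : (∫ s in Ioc ρ (ρ + 1), Real.sqrt (s - ρ) * C)
      ≤ ∫ s in Ioc ρ (ρ + 1), HeatAux.f ρ s := by
    refine setIntegral_mono_on hphi_int
      ((HeatAux.f_integrableOn hρ0).mono_set Ioc_subset_Ioi_self)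
      measurableSet_Ioc (fun s hs => ?_)
    exact HeatAux.f_lower hρ0 hs
  have hstep1 : (∫ s in Ioc ρ (ρ + 1), HeatAux.f ρ s) ≤ ∫ s in Ioi ρ, HeatAux.f ρ s := by
    refine setIntegral_mono_set (HeatAux.f_integrableOn hρ0) ?_
      (HasSubset.Subset.eventuallyLE Ioc_subset_Ioi_self)
    filter_upwards [ae_restrict_mem measurableSet_Ioi] with s hs
    exact HeatAux.f_nonneg hρ0 hs
  have hval : (∫ s in Ioc ρ (ρ + 1), Real.sqrt (s - ρ) * C) = 2 / 3 * C := by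
    rw [MeasureTheory.integral_mul_const, HeatAux.sqrt_integral ρ]
  have hexp : Real.exp (-1) * Real.exp (-ρ ^ 2 / 2) ≤ C := by
    rw [hC, ← Real.exp_add, ← Real.exp_add]
    exact Real.exp_le_exp.2 (by nlinarith [sq_nonneg (ρ - 1)])
  calc K * (2 / 3 * Real.exp (-1)) * Real.exp (-ρ ^ 2 / 2)
      = K * (2 / 3 * (Real.exp (-1) * Real.exp (-ρ ^ 2 / 2))) := by ring
    _ ≤ K * (2 / 3 * C) := by
        apply mul_le_mul_of_nonneg_left _ hKpos.le
        apply mul_le_mul_of_nonneg_left hexp (by norm_num)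
    _ = K * ∫ s in Ioc ρ (ρ + 1), Real.sqrt (s - ρ) * C := by rw [hval]
    _ ≤ K * ∫ s in Ioc ρ (ρ + 1), HeatAux.f ρ s :=
        mul_le_mul_of_nonneg_left hstep2 hKpos.le
    _ ≤ K * ∫ s in Ioi ρ, HeatAux.f ρ s :=
        mul_le_mul_of_nonneg_left hstep1 hKpos.le
    _ = heatH 2 z z' := hH.symm
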